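/- The action of S_n on R = ℤ[x_1,…,x_n] ⊗ Λ(ω_1,…,ω_n), where s_i(x_j) = x_{s_i(j)} and s_i(ω_j) = ω_j + δ_{i,j}(x_i − x_{i+1})ω_{i+1}, defines a group action, i.e. the assignments satisfy the Coxeter relations s_i² = 1, (s_i s_{i+1})³ = 1, and s_i s_j = s_j s_i for |i−j|>1. -/

import Mathlib

open MvPolynomial

/-!
On polynomials `s_i` renames the variables along the transposition `(i i+1)`, so its relations are
those of the transpositions. On the `ω`-part `s_i` renames every coefficient and corrects only the
coordinate of `ω_{i+1}`, by `(x_i - x_{i+1}) · s_i(v_i)`. Compared coordinatewise, each relation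
therefore reduces to the polynomial one away from the corrected coordinates, and at those to
`s_i(x_i - x_{i+1}) = -(x_i - x_{i+1})` for `s_i² = 1` and to
`x_i - x_{i+2} = (x_i - x_{i+1}) + (x_{i+1} - x_{i+2})` for the braid relation. None of this uses
that the indices are consecutive, so the computation is done for arbitrary distinct indices.
-/

/-- Action of `s_i` on polynomials: rename by the swap of the variables `x_i, x_{i+1}`. -/
noncomputable def sSwap (n i : ℕ) (h : i + 1 < n) :
    MvPolynomial (Fin n) ℤ → MvPolynomial (Fin n) ℤ :=
  fun f => rename ⇑(Equiv.swap (⟨i, Nat.lt_of_succ_lt h⟩ : Fin n) ⟨i + 1, h⟩) f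

/-- Action of `s_i` on the degree-one part `⊕_j ℤ[x]·ω_j` of `ℤ[x]⊗Λ(ω)`, encoded in the
basis `ω_0,…,ω_{n−1}` (0-based): `s_i(Σ c_j ω_j) = Σ s_i(c_j) s_i(ω_j)` with
`s_i(ω_j) = ω_j + δ_{i,j}(x_i − x_{i+1})·ω_{i+1}`. -/
noncomputable def Sact (n i : ℕ) (h : i + 1 < n)
    (v : Fin n → MvPolynomial (Fin n) ℤ) : Fin n → MvPolynomial (Fin n) ℤ :=
  fun j =>
    (if (j : ℕ) = i + 1 then
        (X (⟨i, Nat.lt_of_succ_lt h⟩ : Fin n) - X ⟨i + 1, h⟩) *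
          sSwap n i h (v ⟨i, Nat.lt_of_succ_lt h⟩)
      else 0) +
    sSwap n i h (v j)

lemma braid_cube_apply {α : Type*} {A B : α → α} (hA : Function.Involutive A)
    (hB : Function.Involutive B) (hAB : ∀ x, B (A (B x)) = A (B (A x))) (x : α) :
    A (B (A (B (A (B x))))) = x := by
  rw [hAB x, hA, hB, hA]

open Equiv

section Rename

variable {ι R : Type*} [CommSemiring R]

lemma rename_perm_rename_perm (σ τ : Perm ι) (p : MvPolynomial ι R) :
    rename σ (rename τ p) = rename ⇑(σ * τ) p :=
  rename_rename _ _ _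

variable [DecidableEq ι]

lemma rename_swap_rename_swap (a b : ι) (p : MvPolynomial ι R) :
    rename (swap a b) (rename (swap a b) p) = p := by
  rw [rename_perm_rename_perm, swap_mul_self, Perm.coe_one, rename_id_apply]

lemma rename_swap_braid {a b c : ι} (hab : a ≠ b) (hac : a ≠ c) (hbc : b ≠ c)
    (p : MvPolynomial ι R) :
    rename (swap b c) (rename (swap a b) (rename (swap b c) p)) =
      rename (swap a b) (rename (swap b c) (rename (swap a b) p)) := by
  simp only [rename_perm_rename_perm, ← mul_assoc]
  rw [swap_mul_swap_mul_swap hab hac, swap_comm b c, swap_comm a b,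
    swap_mul_swap_mul_swap hbc.symm hac.symm, swap_comm]

lemma swap_mul_swap_of_ne {a b c d : ι} (hac : a ≠ c) (had : a ≠ d) (hbc : b ≠ c)
    (hbd : b ≠ d) : swap a b * swap c d = swap c d * swap a b := by
  rw [mul_swap_eq_swap_mul, swap_apply_of_ne_of_ne hac.symm hbc.symm,
    swap_apply_of_ne_of_ne had.symm hbd.symm]

lemma rename_swap_comm {a b c d : ι} (hac : a ≠ c) (had : a ≠ d) (hbc : b ≠ c)
    (hbd : b ≠ d) (p : MvPolynomial ι R) :
    rename (swap a b) (rename (swap c d) p) = rename (swap c d) (rename (swap a b) p) := by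
  rw [rename_perm_rename_perm, rename_perm_rename_perm, swap_mul_swap_of_ne hac had hbc hbd]

end Rename

section TwistedSwap

variable {ι R : Type*} [CommRing R] [DecidableEq ι]

noncomputable def twistedSwap (a b : ι) (v : ι → MvPolynomial ι R) :
    ι → MvPolynomial ι R :=
  fun j => (if j = b then (X a - X b) * rename (swap a b) (v a) else 0) + rename (swap a b) (v j)

variable {a b c d : ι}

lemma twistedSwap_apply_of_ne {j : ι} (hj : j ≠ b) (v : ι → MvPolynomial ι R) :
    twistedSwap a b v j = rename (swap a b) (v j) := by
  simp [twistedSwap, hj]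

lemma twistedSwap_apply_right (v : ι → MvPolynomial ι R) :
    twistedSwap a b v b = (X a - X b) * rename (swap a b) (v a) + rename (swap a b) (v b) := by
  simp [twistedSwap]

lemma rename_swap_X_sub_X (a b : ι) :
    rename (swap a b) (X a - X b : MvPolynomial ι R) = -(X a - X b) := by
  simp

lemma twistedSwap_twistedSwap (hab : a ≠ b) (v : ι → MvPolynomial ι R) :
    twistedSwap a b (twistedSwap a b v) = v := by
  funext j
  by_cases hjb : j = b
  · subst j
    simp only [twistedSwap_apply_right, twistedSwap_apply_of_ne hab, map_add, map_mul,
      rename_swap_X_sub_X, rename_swap_rename_swap]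
    ring
  · simp only [twistedSwap_apply_of_ne hjb, rename_swap_rename_swap]

lemma twistedSwap_braid (hab : a ≠ b) (hac : a ≠ c) (hbc : b ≠ c)
    (v : ι → MvPolynomial ι R) :
    twistedSwap b c (twistedSwap a b (twistedSwap b c v)) =
      twistedSwap a b (twistedSwap b c (twistedSwap a b v)) := by
  funext j
  by_cases hjb : j = b
  · subst j
    simp only [twistedSwap_apply_right, twistedSwap_apply_of_ne hab, twistedSwap_apply_of_ne hac,
      twistedSwap_apply_of_ne hbc, map_add, map_mul, map_sub, rename_X, swap_apply_left,
      swap_apply_of_ne_of_ne hab hac, swap_apply_of_ne_of_ne hac.symm hbc.symm,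
      rename_swap_braid hab hac hbc]
    ring
  by_cases hjc : j = c
  · subst j
    simp only [twistedSwap_apply_right, twistedSwap_apply_of_ne hac, twistedSwap_apply_of_ne hbc,
      twistedSwap_apply_of_ne hbc.symm, map_add, map_mul, map_sub, rename_X, swap_apply_left,
      swap_apply_right, swap_apply_of_ne_of_ne hab hac, swap_apply_of_ne_of_ne hac.symm hbc.symm,
      rename_swap_braid hab hac hbc]
    ring
  · simp only [twistedSwap_apply_of_ne hjb, twistedSwap_apply_of_ne hjc,
      rename_swap_braid hab hac hbc]

lemma twistedSwap_comm (hac : a ≠ c) (had : a ≠ d) (hbc : b ≠ c) (hbd : b ≠ d)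
    (v : ι → MvPolynomial ι R) :
    twistedSwap a b (twistedSwap c d v) = twistedSwap c d (twistedSwap a b v) := by
  funext j
  by_cases hjb : j = b
  · subst j
    simp only [twistedSwap_apply_right, twistedSwap_apply_of_ne had, twistedSwap_apply_of_ne hbd,
      map_add, map_mul, map_sub, rename_X, swap_apply_of_ne_of_ne hac had,
      swap_apply_of_ne_of_ne hbc hbd, rename_swap_comm hac had hbc hbd]
  by_cases hjd : j = d
  · subst j
    simp only [twistedSwap_apply_right, twistedSwap_apply_of_ne hbc.symm,
      twistedSwap_apply_of_ne hbd.symm, map_add, map_mul, map_sub, rename_X,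
      swap_apply_of_ne_of_ne hac.symm hbc.symm, swap_apply_of_ne_of_ne had.symm hbd.symm,
      rename_swap_comm hac had hbc hbd]
  · simp only [twistedSwap_apply_of_ne hjb, twistedSwap_apply_of_ne hjd,
      rename_swap_comm hac had hbc hbd]

end TwistedSwap

lemma Sact_eq_twistedSwap (n i : ℕ) (h : i + 1 < n) :
    Sact n i h = twistedSwap ⟨i, Nat.lt_of_succ_lt h⟩ ⟨i + 1, h⟩ := by
  funext v j
  simp [Sact, twistedSwap, sSwap, Fin.ext_iff]

/-- The assignments `s_i(x_j) = x_{s_i(j)}`, `s_i(ω_j) = ω_j + δ_{i,j}(x_i − x_{i+1})ω_{i+1}`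
satisfy the Coxeter relations `s_i² = 1`, `(s_i s_{i+1})³ = 1`, and `s_i s_j = s_j s_i` for
`|i − j| > 1`, both on the polynomial part and on the `ω`-part; hence they define an
`S_n`-action on `R = ℤ[x_1,…,x_n] ⊗ Λ(ω_1,…,ω_n)`. -/
theorem snAction_coxeter (n : ℕ) :
    (∀ (i : ℕ) (h : i + 1 < n) (f : MvPolynomial (Fin n) ℤ),
      sSwap n i h (sSwap n i h f) = f) ∧
    (∀ (i : ℕ) (h : i + 1 < n) (v : Fin n → MvPolynomial (Fin n) ℤ),
      Sact n i h (Sact n i h v) = v) ∧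
    (∀ (i : ℕ) (h : i + 2 < n) (f : MvPolynomial (Fin n) ℤ),
      sSwap n i (Nat.lt_of_succ_lt h) (sSwap n (i + 1) h
        (sSwap n i (Nat.lt_of_succ_lt h) (sSwap n (i + 1) h
          (sSwap n i (Nat.lt_of_succ_lt h) (sSwap n (i + 1) h f))))) = f) ∧
    (∀ (i : ℕ) (h : i + 2 < n) (v : Fin n → MvPolynomial (Fin n) ℤ),
      Sact n i (Nat.lt_of_succ_lt h) (Sact n (i + 1) h
        (Sact n i (Nat.lt_of_succ_lt h) (Sact n (i + 1) h
          (Sact n i (Nat.lt_of_succ_lt h) (Sact n (i + 1) h v))))) = v) ∧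
    (∀ (i j : ℕ) (hi : i + 1 < n) (hj : j + 1 < n), i + 1 < j →
      (∀ f : MvPolynomial (Fin n) ℤ,
        sSwap n i hi (sSwap n j hj f) = sSwap n j hj (sSwap n i hi f)) ∧
      (∀ v : Fin n → MvPolynomial (Fin n) ℤ,
        Sact n i hi (Sact n j hj v) = Sact n j hj (Sact n i hi v))) := by
  have mk_ne {p q : ℕ} {hp : p < n} {hq : q < n} (hpq : p ≠ q) :
      (⟨p, hp⟩ : Fin n) ≠ ⟨q, hq⟩ :=
    Fin.ne_of_val_ne hpq
  have sSwap_involutive (i : ℕ) (h : i + 1 < n) : Function.Involutive (sSwap n i h) :=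
    rename_swap_rename_swap _ _
  have Sact_involutive (i : ℕ) (h : i + 1 < n) : Function.Involutive (Sact n i h) := by
    rw [Sact_eq_twistedSwap]
    exact twistedSwap_twistedSwap (mk_ne (by omega))
  refine ⟨sSwap_involutive, Sact_involutive, fun i h => ?_, fun i h => ?_,
    fun i j hi hj hij => ⟨fun f => ?_, fun v => ?_⟩⟩
  · exact braid_cube_apply (sSwap_involutive _ _) (sSwap_involutive _ _)
      (rename_swap_braid (mk_ne (by omega)) (mk_ne (by omega)) (mk_ne (by omega)))
  · refine braid_cube_apply (Sact_involutive _ _) (Sact_involutive _ _) fun v => ?_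
    simp only [Sact_eq_twistedSwap]
    exact twistedSwap_braid (mk_ne (by omega)) (mk_ne (by omega)) (mk_ne (by omega)) v
  · exact rename_swap_comm (mk_ne (by omega)) (mk_ne (by omega)) (mk_ne (by omega))
      (mk_ne (by omega)) f
  · simp only [Sact_eq_twistedSwap]
    exact twistedSwap_comm (mk_ne (by omega)) (mk_ne (by omega)) (mk_ne (by omega))
      (mk_ne (by omega)) v
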